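/- arXiv:1406.2597 — 3 statements merged into one kernel-verified Lean document; each statement's English description precedes it below -/
import Mathlib

section
/- Let f be a positive continuous linear functional on ℓ∞ and define μ : 𝒫(ℕ) → ℝ by μ(A) = f(χ_A), where χ_A is the characteristic sequence of A. Then μ is a density measure if and only if f extends the Cesàro mean, i.e., f(x) = C(x) for every x ∈ Ces. -/
open Filter Topology

noncomputable section

/-- The space `ℓ∞` of bounded real sequences. -/
abbrev EllInfty : Type := lp (fun _ : ℕ => ℝ) ⊤

/-- The characteristic sequence of a set `A ⊆ ℕ` (as a plain function). -/
def chiFun (A : Set ℕ) : ℕ → ℝ := A.indicator 1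

lemma chiFun_memℓp (A : Set ℕ) : Memℓp (chiFun A) ⊤ := by
  apply memℓp_infty
  refine ⟨1, ?_⟩
  rintro r ⟨n, rfl⟩
  by_cases h : n ∈ A <;> simp [chiFun, Set.indicator, h]

/-- The characteristic sequence of a set `A ⊆ ℕ` as an element of `ℓ∞`. -/
def chi (A : Set ℕ) : EllInfty := ⟨chiFun A, chiFun_memℓp A⟩

/-- `A(n) = |A ∩ {1,…,n}|` (as a real number). -/
def count (A : Set ℕ) (n : ℕ) : ℝ := ∑ k ∈ Finset.Icc 1 n, chiFun A k

/-- `A` has asymptotic density `d`, i.e. `A(n)/n → d`. -/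
def HasDensity (A : Set ℕ) (d : ℝ) : Prop :=
  Tendsto (fun n => count A n / n) atTop (𝓝 d)

/-- A density measure: a finitely additive measure `μ : 𝒫(ℕ) → [0,1]` with `μ(ℕ) = 1`
which extends the asymptotic density. -/
def IsDensityMeasure (μ : Set ℕ → ℝ) : Prop :=
  (∀ A B : Set ℕ, Disjoint A B → μ (A ∪ B) = μ A + μ B) ∧
  (∀ A : Set ℕ, μ A ∈ Set.Icc (0 : ℝ) 1) ∧
  μ Set.univ = 1 ∧
  (∀ A d, HasDensity A d → μ A = d)

/-- The sequence of Cesàro averages `(x₁ + … + xₙ)/n`. -/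
def cesaroAvg (x : ℕ → ℝ) (n : ℕ) : ℝ := (∑ i ∈ Finset.Icc 1 n, x i) / n

/-- `x` has Cesàro mean `c`. -/
def HasCesaro (x : ℕ → ℝ) (c : ℝ) : Prop := Tendsto (cesaroAvg x) atTop (𝓝 c)

/-- A functional on `ℓ∞` is positive if it is nonnegative on nonnegative sequences. -/
def IsPositiveFunctional (f : EllInfty → ℝ) : Prop :=
  ∀ x : EllInfty, (∀ n, 0 ≤ x n) → 0 ≤ f x

/-- A functional on `ℓ∞` extends the Cesàro mean. -/
def ExtendsCesaro (f : EllInfty → ℝ) : Prop :=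
  ∀ (x : EllInfty) (c : ℝ), HasCesaro (⇑x) c → f x = c

/-- The set of positive continuous linear functionals on `ℓ∞` extending the Cesàro mean. -/
def Cesex : Set (EllInfty →L[ℝ] ℝ) :=
  {f | IsPositiveFunctional f ∧ ExtendsCesaro f}

/-- `f_C(x) = sup { f(x) : f ∈ Cesex }`. -/
def fC (x : EllInfty) : ℝ := sSup ((fun f : EllInfty →L[ℝ] ℝ => f x) '' Cesex)

/-- `Θ_{θ,n}(x) = (Σ_{θn < i ≤ n} x_i) / (n(1-θ))`. -/
def Theta (x : ℕ → ℝ) (θ : ℝ) (n : ℕ) : ℝ :=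
  (∑ i ∈ Finset.Icc 1 n, if θ * n < (i : ℝ) then x i else 0) / (n * (1 - θ))

/-- `Θ_θ(x) = limsup_{n → ∞} Θ_{θ,n}(x)`. -/
def ThetaSup (x : ℕ → ℝ) (θ : ℝ) : ℝ := limsup (Theta x θ) atTop

/-- `t(x) = lim_{θ → 1⁻} Θ_θ(x)`. -/
def tFun (x : ℕ → ℝ) : ℝ := limUnder (𝓝[<] (1 : ℝ)) (ThetaSup x)

/-- `A_α(n) = Σ_{k ∈ A, k ≤ n} k^α`. -/
def aSum (A : Set ℕ) (α : ℝ) (n : ℕ) : ℝ :=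
  ∑ k ∈ Finset.Icc 1 n, chiFun A k * (k : ℝ) ^ α

/-- The upper `α`-density `d̄_α(A) = limsup_{n→∞} A_α(n)/ℕ_α(n)`. -/
def upperADens (A : Set ℕ) (α : ℝ) : ℝ :=
  limsup (fun n => aSum A α n / aSum Set.univ α n) atTop

/-- The lower `α`-density `d̲_α(A) = liminf_{n→∞} A_α(n)/ℕ_α(n)`. -/
def lowerADens (A : Set ℕ) (α : ℝ) : ℝ :=
  liminf (fun n => aSum A α n / aSum Set.univ α n) atTop

/-- `d̄_∞(A) = lim_{α→∞} d̄_α(A)`. -/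
def dInftyUpper (A : Set ℕ) : ℝ := limUnder (atTop : Filter ℝ) (upperADens A)

/-- `d̲_∞(A) = lim_{α→∞} d̲_α(A)`. -/
def dInftyLower (A : Set ℕ) : ℝ := limUnder (atTop : Filter ℝ) (lowerADens A)

/-- The quotient `(A(n) - A(⌊θn⌋))/(n - θn)` appearing in the Pólya density. -/
def polyaQuot (A : Set ℕ) (θ : ℝ) (n : ℕ) : ℝ :=
  (count A n - count A ⌊θ * n⌋₊) / (n - θ * n)

/-- The upper Pólya density `p̄(A)`. -/
def pUpper (A : Set ℕ) : ℝ :=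
  limUnder (𝓝[<] (1 : ℝ)) (fun θ => limsup (polyaQuot A θ) atTop)

/-- The lower Pólya density `p̲(A)`. -/
def pLower (A : Set ℕ) : ℝ :=
  limUnder (𝓝[<] (1 : ℝ)) (fun θ => liminf (polyaQuot A θ) atTop)

/-- `λ̄(A) = sup { μ(A) : μ a density measure }`. -/
def lamUpper (A : Set ℕ) : ℝ := sSup {r | ∃ μ, IsDensityMeasure μ ∧ μ A = r}

/-- `λ̲(A) = inf { μ(A) : μ a density measure }`. -/
def lamLower (A : Set ℕ) : ℝ := sInf {r | ∃ μ, IsDensityMeasure μ ∧ μ A = r}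

/-- `d̄*(A) = inf { d(B) : B ⊇ A, B ∈ 𝒟 }`. -/
def dUpperStar (A : Set ℕ) : ℝ := sInf {r | ∃ B, A ⊆ B ∧ HasDensity B r}

/-- `d̲*(A) = sup { d(B) : B ⊆ A, B ∈ 𝒟 }`. -/
def dLowerStar (A : Set ℕ) : ℝ := sSup {r | ∃ B, B ⊆ A ∧ HasDensity B r}

/-- The `ℱ`-limit of a (bounded) real sequence along an ultrafilter `ℱ`:
the unique `L` with `Tendsto x ℱ (𝓝 L)` (when it exists). -/
def ulim (F : Ultrafilter ℕ) (x : ℕ → ℝ) : ℝ := limUnder (F : Filter ℕ) x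

/-- An ultrafilter is free (non-principal) iff it contains all cofinite sets. -/
def IsFreeUltrafilter (F : Ultrafilter ℕ) : Prop := (F : Filter ℕ) ≤ Filter.cofinite

/-- The set of positive functionals extending Cesàro mean, inside the weak-* dual of `ℓ∞`. -/
def CesexW : Set (WeakDual ℝ EllInfty) :=
  {f | (∀ x : EllInfty, (∀ n, 0 ≤ x n) → 0 ≤ f x) ∧
    ∀ (x : EllInfty) (c : ℝ), HasCesaro (⇑x) c → f x = c}

/-!
If `f` extends the Cesàro mean, `A ↦ f(χ_A)` is finitely additive by linearity, `[0,1]`-valued by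
positivity, and equals `d(A)` because `d(A)` is the Cesàro mean of `χ_A`.

Conversely, after an affine change we may assume `0 ≤ x ≤ 1`; let `S n = x₁ + ⋯ + xₙ` and let `c`
be the Cesàro mean of `x`. For `r ∈ [0,1)` the set `B_r` of those `n` at which `S n + r` passes an
integer has counting function `⌊S n + r⌋`, so `d(B_r) = c` and `f(χ_{B_r}) = c`. Hermite's identity
`∑_{j<m} ⌊t + j/m⌋ = ⌊m t⌋` shows that the mean of the `χ_{B_{j/m}}`, `j < m`, is within `1/m` of
`x` in sup norm, and a positive `f` with `f(1) = 1` has norm `1`, whence `|f x - c| ≤ 1/m`.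
-/

open Finset

lemma coe_chi (A : Set ℕ) : ⇑(chi A) = chiFun A := rfl

lemma chiFun_univ : chiFun Set.univ = fun _ => 1 := by
  funext n; simp [chiFun]

lemma chiFun_nonneg (A : Set ℕ) (n : ℕ) : 0 ≤ chiFun A n := by
  unfold chiFun; by_cases h : n ∈ A <;> simp [h]

lemma chiFun_le_one (A : Set ℕ) (n : ℕ) : chiFun A n ≤ 1 := by
  unfold chiFun; by_cases h : n ∈ A <;> simp [h]

lemma chi_union_of_disjoint {A B : Set ℕ} (h : Disjoint A B) : chi (A ∪ B) = chi A + chi B :=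
  lp.ext (Set.indicator_union_of_disjoint h 1)

lemma hasDensity_iff_hasCesaro_chi {A : Set ℕ} {d : ℝ} : HasDensity A d ↔ HasCesaro (chi A) d :=
  Iff.rfl

lemma cesaroAvg_add (x y : ℕ → ℝ) (n : ℕ) :
    cesaroAvg (x + y) n = cesaroAvg x n + cesaroAvg y n := by
  simp [cesaroAvg, sum_add_distrib, add_div]

lemma cesaroAvg_const_mul (a : ℝ) (x : ℕ → ℝ) (n : ℕ) :
    cesaroAvg (fun i => a * x i) n = a * cesaroAvg x n := by
  simp [cesaroAvg, ← mul_sum, mul_div_assoc]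

lemma cesaroAvg_const (c : ℝ) {n : ℕ} (hn : n ≠ 0) : cesaroAvg (fun _ => c) n = c := by
  simp [cesaroAvg, hn]

lemma hasCesaro_const (c : ℝ) : HasCesaro (fun _ => c) c :=
  tendsto_const_nhds.congr' ((eventually_ne_atTop 0).mono fun _ hn => (cesaroAvg_const c hn).symm)

lemma HasCesaro.add {x y : ℕ → ℝ} {c d : ℝ} (hx : HasCesaro x c) (hy : HasCesaro y d) :
    HasCesaro (x + y) (c + d) :=
  (Tendsto.add hx hy).congr fun n => (cesaroAvg_add x y n).symm

lemma HasCesaro.const_mul {x : ℕ → ℝ} {c : ℝ} (a : ℝ) (hx : HasCesaro x c) :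
    HasCesaro (fun i => a * x i) (a * c) :=
  (Tendsto.const_mul a hx).congr fun n => (cesaroAvg_const_mul a x n).symm

lemma hasDensity_univ : HasDensity Set.univ 1 := by
  rw [hasDensity_iff_hasCesaro_chi, coe_chi, chiFun_univ]
  exact hasCesaro_const 1

lemma hasDensity_singleton_zero : HasDensity {0} 0 := by
  have h : ∀ n, count {0} n / n = 0 := fun n => by
    rw [count, sum_eq_zero fun i hi => ?_, zero_div]
    simp [chiFun, (Nat.one_le_iff_ne_zero.1 (mem_Icc.1 hi).1)]
  simp [HasDensity, h]

namespace IsPositiveFunctional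

variable {f : EllInfty →L[ℝ] ℝ}

lemma mono (hf : IsPositiveFunctional f) {x y : EllInfty} (h : ∀ n, x n ≤ y n) : f x ≤ f y := by
  have := hf (y - x) fun n => by simpa using h n
  rwa [map_sub, sub_nonneg] at this

lemma abs_le_of_forall_abs_le (hf : IsPositiveFunctional f) (h1 : f (chi Set.univ) = 1)
    {w : EllInfty} {δ : ℝ} (hw : ∀ n, |w n| ≤ δ) : |f w| ≤ δ := by
  have hconst : ∀ a : ℝ, f (a • chi Set.univ) = a := fun a => by
    rw [map_smul, h1, smul_eq_mul, mul_one]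
  rw [abs_le]
  constructor
  · simpa [hconst] using hf.mono (x := (-δ) • chi Set.univ) (y := w) fun n => by
      simpa only [lp.coeFn_smul, coe_chi, chiFun_univ, Pi.smul_apply, smul_eq_mul, mul_one]
        using neg_le_of_abs_le (hw n)
  · simpa [hconst] using hf.mono (x := w) (y := δ • chi Set.univ) fun n => by
      simpa [coe_chi, chiFun_univ] using le_of_abs_le (hw n)

end IsPositiveFunctional

lemma sum_floor_add_div_add_inv (m : ℕ) (hm : m ≠ 0) (t : ℝ) :
    ∑ j ∈ range m, ⌊(t + 1 / m) + j / m⌋ = ∑ j ∈ range m, ⌊t + j / m⌋ + 1 := by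
  have hm' : (m : ℝ) ≠ 0 := Nat.cast_ne_zero.2 hm
  have h := (sum_range_succ' (fun j : ℕ => ⌊t + j / m⌋) m).symm.trans (sum_range_succ _ m)
  simp only [Nat.cast_zero, zero_div, add_zero, div_self hm', Int.floor_add_one] at h
  have hshift : ∀ j : ℕ, t + 1 / m + j / m = t + ((j + 1 : ℕ) : ℝ) / m := fun j => by
    push_cast; ring
  simp only [hshift]
  linarith

lemma sum_floor_add_div_eq_zero {m : ℕ} {t : ℝ} (ht0 : 0 ≤ t) (ht1 : t < 1 / m) :
    ∑ j ∈ range m, ⌊t + j / m⌋ = 0 := by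
  refine sum_eq_zero fun j hj => Int.floor_eq_zero_iff.2 ⟨by positivity, ?_⟩
  have hm : (0 : ℝ) < m := by exact_mod_cast (Nat.zero_le j).trans_lt (mem_range.1 hj)
  have hj : (j : ℝ) + 1 ≤ m := by exact_mod_cast mem_range.1 hj
  calc t + j / m < 1 / m + j / m := by linarith
    _ = (j + 1) / m := by ring
    _ ≤ 1 := (div_le_one hm).2 hj

/-- Hermite's identity. -/
theorem sum_floor_add_div (m : ℕ) (hm : m ≠ 0) (t : ℝ) :
    ∑ j ∈ range m, ⌊t + j / m⌋ = ⌊m * t⌋ := by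
  have hm' : (0 : ℝ) < m := by positivity
  have shift : ∀ (k : ℤ) (s : ℝ),
      ∑ j ∈ range m, ⌊(s + k / m) + j / m⌋ = ∑ j ∈ range m, ⌊s + j / m⌋ + k := by
    intro k s
    induction k using Int.induction_on with
    | zero => simp
    | succ k ih =>
      rw [show s + ((k + 1 : ℤ) : ℝ) / m = (s + k / m) + 1 / m by push_cast; ring,
        sum_floor_add_div_add_inv m hm]
      push_cast at ih ⊢
      linarith
    | pred k ih =>
      have h := sum_floor_add_div_add_inv m hm (s + ((-k - 1 : ℤ) : ℝ) / m)
      rw [show s + ((-k - 1 : ℤ) : ℝ) / m + 1 / m = s + ((-k : ℤ) : ℝ) / m by push_cast; ring,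
        ih] at h
      linarith
  have hk := Int.floor_le (m * t)
  have hk' := Int.lt_floor_add_one (m * t)
  have h0 : ∑ j ∈ range m, ⌊(t - ⌊m * t⌋ / m) + j / m⌋ = 0 := by
    apply sum_floor_add_div_eq_zero
    · rw [sub_nonneg, div_le_iff₀ hm']; linarith
    · rw [sub_lt_iff_lt_add, ← add_div, lt_div_iff₀ hm']; linarith
  have h := shift ⌊m * t⌋ (t - ⌊m * t⌋ / m)
  rwa [h0, zero_add, sub_add_cancel] at h

def partialSum (x : ℕ → ℝ) (n : ℕ) : ℝ := ∑ i ∈ Icc 1 n, x i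

lemma partialSum_zero (x : ℕ → ℝ) : partialSum x 0 = 0 := rfl

lemma partialSum_succ (x : ℕ → ℝ) (n : ℕ) :
    partialSum x (n + 1) = partialSum x n + x (n + 1) :=
  sum_Icc_succ_top (Nat.le_add_left 1 n) x

lemma cesaroAvg_eq_partialSum_div (x : ℕ → ℝ) (n : ℕ) :
    cesaroAvg x n = partialSum x n / n := rfl

/-- `0` is never a member, as `0 - 1 = 0` in `ℕ`. -/
def greedySet (x : ℕ → ℝ) (r : ℝ) : Set ℕ :=
  {n | ⌊partialSum x (n - 1) + r⌋ < ⌊partialSum x n + r⌋}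

lemma chiFun_greedySet_zero (x : ℕ → ℝ) (r : ℝ) : chiFun (greedySet x r) 0 = 0 := by
  simp [chiFun, greedySet]

section UnitInterval

variable {x : ℕ → ℝ}

lemma chiFun_greedySet_succ (hx0 : ∀ n, 0 ≤ x n) (hx1 : ∀ n, x n ≤ 1) (r : ℝ) (n : ℕ) :
    chiFun (greedySet x r) (n + 1) = ⌊partialSum x (n + 1) + r⌋ - ⌊partialSum x n + r⌋ := by
  have hle : ⌊partialSum x n + r⌋ ≤ ⌊partialSum x (n + 1) + r⌋ :=
    Int.floor_le_floor (by rw [partialSum_succ]; linarith [hx0 (n + 1)])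
  have hle_one : ⌊partialSum x (n + 1) + r⌋ ≤ ⌊partialSum x n + r⌋ + 1 := by
    rw [← Int.floor_add_one]
    exact Int.floor_le_floor (by rw [partialSum_succ]; linarith [hx1 (n + 1)])
  by_cases h : ⌊partialSum x n + r⌋ < ⌊partialSum x (n + 1) + r⌋
  · have : n + 1 ∈ greedySet x r := h
    rw [show ⌊partialSum x (n + 1) + r⌋ = ⌊partialSum x n + r⌋ + 1 by omega]
    simp [chiFun, this]
  · have : n + 1 ∉ greedySet x r := h
    rw [show ⌊partialSum x (n + 1) + r⌋ = ⌊partialSum x n + r⌋ by omega]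
    simp [chiFun, this]

lemma count_greedySet (hx0 : ∀ n, 0 ≤ x n) (hx1 : ∀ n, x n ≤ 1) {r : ℝ} (hr : r ∈ Set.Ico 0 1)
    (n : ℕ) :
    count (greedySet x r) n = ⌊partialSum x n + r⌋ := by
  induction n with
  | zero => simp [count, partialSum_zero, Int.floor_eq_zero_iff.2 hr]
  | succ n ih =>
    rw [count, sum_Icc_succ_top (Nat.le_add_left 1 n), ← count, ih,
      chiFun_greedySet_succ hx0 hx1]
    ring

lemma hasDensity_greedySet (hx0 : ∀ n, 0 ≤ x n) (hx1 : ∀ n, x n ≤ 1) {c r : ℝ} (hc : HasCesaro x c)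
    (hr : r ∈ Set.Ico 0 1) :
    HasDensity (greedySet x r) c := by
  refine hc.congr_dist (squeeze_zero (fun _ => dist_nonneg) (fun n => ?_)
    tendsto_one_div_atTop_nhds_zero_nat)
  rw [cesaroAvg_eq_partialSum_div, count_greedySet hx0 hx1 hr, Real.dist_eq, ← sub_div,
    abs_div, Nat.abs_cast]
  gcongr
  have := Int.floor_le (partialSum x n + r)
  have := Int.lt_floor_add_one (partialSum x n + r)
  rw [abs_le]
  constructor <;> linarith [hr.1, hr.2]

lemma sum_chiFun_greedySet_succ (hx0 : ∀ n, 0 ≤ x n) (hx1 : ∀ n, x n ≤ 1) {m : ℕ} (hm : m ≠ 0)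
    (n : ℕ) :
    ∑ j ∈ range m, chiFun (greedySet x (j / m)) (n + 1)
      = ⌊m * partialSum x (n + 1)⌋ - ⌊m * partialSum x n⌋ := by
  simp only [chiFun_greedySet_succ hx0 hx1, sum_sub_distrib]
  exact_mod_cast congrArg₂ (· - ·) (sum_floor_add_div m hm _) (sum_floor_add_div m hm _)

end UnitInterval

/-- The last term takes care of the index `0`, which Cesàro means and densities ignore. -/
def greedyApprox (x : EllInfty) (m : ℕ) : EllInfty :=
  (m : ℝ)⁻¹ • ∑ j ∈ range m, chi (greedySet x (j / m)) + x 0 • chi {0}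

lemma greedyApprox_apply (x : EllInfty) (m n : ℕ) :
    greedyApprox x m n
      = (m : ℝ)⁻¹ * ∑ j ∈ range m, chiFun (greedySet x (j / m)) n + x 0 * chiFun {0} n := by
  simp only [greedyApprox, lp.coeFn_add, lp.coeFn_smul, lp.coeFn_sum, coe_chi, Pi.add_apply,
    Pi.smul_apply, Finset.sum_apply, smul_eq_mul]

lemma abs_sub_greedyApprox_le {x : EllInfty} (hx0 : ∀ n, 0 ≤ x n) (hx1 : ∀ n, x n ≤ 1)
    {m : ℕ} (hm : m ≠ 0) (n : ℕ) : |x n - greedyApprox x m n| ≤ 1 / m := by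
  rw [greedyApprox_apply]
  cases n with
  | zero => simp [chiFun_greedySet_zero, show chiFun {0} 0 = 1 by simp [chiFun]]
  | succ n =>
    set a := m * partialSum x (n + 1)
    set b := m * partialSum x n
    have hxn : x (n + 1) = (m : ℝ)⁻¹ * (a - b) := by
      simp only [a, b, partialSum_succ]; field_simp; ring
    have hab : |(a - b) - (⌊a⌋ - ⌊b⌋)| ≤ 1 := by
      have := Int.floor_le a; have := Int.lt_floor_add_one a
      have := Int.floor_le b; have := Int.lt_floor_add_one b
      rw [abs_le]; constructor <;> linarith
    rw [sum_chiFun_greedySet_succ hx0 hx1 hm, hxn]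
    simp only [chiFun, Set.indicator_of_notMem (show n + 1 ∉ ({0} : Set ℕ) by simp), mul_zero,
      add_zero, ← mul_sub, abs_mul, abs_inv, Nat.abs_cast, one_div]
    exact mul_le_of_le_one_right (by positivity) hab

section DensityFunctional

variable {f : EllInfty →L[ℝ] ℝ}

lemma apply_greedyApprox (hdens : ∀ A d, HasDensity A d → f (chi A) = d) {x : EllInfty}
    (hx0 : ∀ n, 0 ≤ x n) (hx1 : ∀ n, x n ≤ 1) {c : ℝ} (hc : HasCesaro x c) {m : ℕ}
    (hm : m ≠ 0) : f (greedyApprox x m) = c := by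
  have hB : ∀ j ∈ range m, f (chi (greedySet x (j / m))) = c := fun j hj =>
    hdens _ _ <| hasDensity_greedySet hx0 hx1 hc
      ⟨by positivity, (div_lt_one (by positivity)).2 (by exact_mod_cast mem_range.1 hj)⟩
  rw [greedyApprox, map_add, map_smul, map_sum, sum_congr rfl hB, map_smul,
    hdens _ _ hasDensity_singleton_zero]
  simp [hm]

lemma apply_eq_of_hasCesaro_of_nonneg_of_le_one (hf : IsPositiveFunctional f)
    (hdens : ∀ A d, HasDensity A d → f (chi A) = d) {x : EllInfty}
    (hx0 : ∀ n, 0 ≤ x n) (hx1 : ∀ n, x n ≤ 1) {c : ℝ} (hc : HasCesaro x c) : f x = c := by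
  have h1 : f (chi Set.univ) = 1 := hdens _ _ hasDensity_univ
  have hle : ∀ m : ℕ, |f x - c| ≤ 1 / ((m : ℝ) + 1) := fun m => by
    rw [← apply_greedyApprox hdens hx0 hx1 hc m.succ_ne_zero, ← map_sub]
    exact_mod_cast hf.abs_le_of_forall_abs_le h1 fun n =>
      abs_sub_greedyApprox_le hx0 hx1 m.succ_ne_zero n
  exact sub_eq_zero.1 <| abs_nonpos_iff.1 <|
    ge_of_tendsto' tendsto_one_div_add_atTop_nhds_zero_nat hle

theorem extendsCesaro_of_forall_hasDensity (hf : IsPositiveFunctional f)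
    (hdens : ∀ A d, HasDensity A d → f (chi A) = d) : ExtendsCesaro f := by
  intro x c hc
  set M := ‖x‖ + 1
  have hxM : ∀ n, |x n| ≤ ‖x‖ := fun n => lp.norm_apply_le_norm ENNReal.top_ne_zero x n
  set y : EllInfty := (2 * M)⁻¹ • (x + M • chi Set.univ)
  have hy : ⇑y = fun n => (2 * M)⁻¹ * (x n + M) := by
    funext n
    simp only [y, lp.coeFn_smul, lp.coeFn_add, coe_chi, chiFun_univ, Pi.smul_apply, Pi.add_apply,
      smul_eq_mul, mul_one]
  have hfy : f y = (2 * M)⁻¹ * (f x + M) := by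
    rw [map_smul, map_add, map_smul, hdens _ _ hasDensity_univ, smul_eq_mul, smul_eq_mul, mul_one]
  have hyc : HasCesaro y ((2 * M)⁻¹ * (c + M)) := hy ▸ (hc.add (hasCesaro_const M)).const_mul _
  have key := apply_eq_of_hasCesaro_of_nonneg_of_le_one hf hdens
    (fun n => by rw [hy]; exact mul_nonneg (by positivity) (by linarith [abs_le.1 (hxM n)]))
    (fun n => by rw [hy, inv_mul_le_iff₀ (by positivity)]; linarith [abs_le.1 (hxM n)]) hyc
  rw [hfy] at key
  exact add_right_cancel (mul_left_cancel₀ (by positivity) key)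

theorem isDensityMeasure_of_extendsCesaro (hf : IsPositiveFunctional f) (hC : ExtendsCesaro f) :
    IsDensityMeasure fun A => f (chi A) := by
  have h1 : f (chi Set.univ) = 1 := hC _ _ (hasDensity_iff_hasCesaro_chi.1 hasDensity_univ)
  refine ⟨fun A B hAB => ?_, fun A => ⟨?_, ?_⟩, h1,
    fun A d hA => hC _ _ (hasDensity_iff_hasCesaro_chi.1 hA)⟩
  · simp only [chi_union_of_disjoint hAB, map_add]
  · exact hf _ (chiFun_nonneg A)
  · simpa [h1] using hf.mono (x := chi A) (y := chi Set.univ) fun n => by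
      simpa [coe_chi, chiFun_univ] using chiFun_le_one A n

end DensityFunctional

/-- A positive continuous linear functional `f` on `ℓ∞` induces a density measure
`A ↦ f(χ_A)` if and only if `f` extends the Cesàro mean. -/
theorem stmt1 (f : EllInfty →L[ℝ] ℝ) (hf : IsPositiveFunctional f) :
    IsDensityMeasure (fun A : Set ℕ => f (chi A)) ↔ ExtendsCesaro f :=
  ⟨fun hμ => extendsCesaro_of_forall_hasDensity hf hμ.2.2.2,
    isDensityMeasure_of_extendsCesaro hf⟩
end
end

section
/- If −1 ≤ α ≤ β, then for every A ⊆ ℕ one has d̲_β(A) ≤ d̲_α(A) ≤ d̄_α(A) ≤ d̄_β(A). -/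
open Filter Topology

noncomputable section

/-!
Write `w k = k^(α-β)`, which is nonincreasing for `α ≤ β`. Summation by parts expresses
`A_α(n) - r ℕ_α(n)` through the partial sums `A_β(k) - r ℕ_β(k)`, `k ≤ n`, with nonnegative
coefficients `w k - w (k+1)` and `w n`. If `A_β(k) ≤ r ℕ_β(k)` from some `N` on, only the terms
with `k < N` can be positive, so `A_α(n) - r ℕ_α(n)` stays below a constant; since
`ℕ_α(n) → ∞` for `α ≥ -1`, that constant is negligible. This gives `d̄_α(A) ≤ d̄_β(A)`, and the
same argument with reversed inequalities gives `d̲_β(A) ≤ d̲_α(A)`.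
-/

open Finset

section WeightedRatio

variable {f g u : ℕ → ℝ}

def sumRatio (f g : ℕ → ℝ) (n : ℕ) : ℝ := (∑ k ∈ range n, f k) / ∑ k ∈ range n, g k

lemma abs_sumRatio_le_one (hfg : ∀ k, |f k| ≤ g k) (n : ℕ) :
    |sumRatio f g n| ≤ 1 := by
  have hg : 0 ≤ ∑ k ∈ range n, g k := sum_nonneg fun k _ => (abs_nonneg _).trans (hfg k)
  rw [sumRatio, abs_div, abs_of_nonneg hg]
  exact div_le_one_of_le₀ ((abs_sum_le_sum_abs _ _).trans (sum_le_sum fun k _ => hfg k)) hg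

lemma sum_range_le_sum_range_of_nonpos {t : ℕ → ℝ} {N m : ℕ} (ht : ∀ i ≥ N, t i ≤ 0)
    (hm : N ≤ m) : ∑ i ∈ range m, t i ≤ ∑ i ∈ range N, t i := by
  rw [← sum_range_add_sum_Ico t hm]
  exact add_le_of_nonpos_right (sum_nonpos fun i hi => ht i (mem_Ico.1 hi).1)

lemma exists_eventually_sum_mul_le {h : ℕ → ℝ} (hu : Antitone u) (hu0 : ∀ k, 0 ≤ u k)
    (hh : ∀ᶠ n in atTop, ∑ k ∈ range n, h k ≤ 0) :
    ∃ C, ∀ᶠ n in atTop, ∑ k ∈ range n, h k * u k ≤ C := by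
  obtain ⟨N, hN⟩ := eventually_atTop.1 hh
  set H := fun m => ∑ k ∈ range m, h k with hH
  refine ⟨∑ i ∈ range N, (u i - u (i + 1)) * H (i + 1), eventually_atTop.2 ⟨N + 1, fun n hn => ?_⟩⟩
  have hparts : ∑ k ∈ range n, h k * u k
      = u (n - 1) * H n + ∑ i ∈ range (n - 1), (u i - u (i + 1)) * H (i + 1) := by
    have := sum_range_by_parts u h n
    simp only [smul_eq_mul] at this
    rw [sub_eq_add_neg, ← sum_neg_distrib] at this
    simp only [mul_comm (h _), this, ← neg_mul, neg_sub, hH]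
  have hlast : u (n - 1) * H n ≤ 0 := mul_nonpos_of_nonneg_of_nonpos (hu0 _) (hN n (by omega))
  have htail := sum_range_le_sum_range_of_nonpos (t := fun i => (u i - u (i + 1)) * H (i + 1))
    (fun i hi => mul_nonpos_of_nonneg_of_nonpos (sub_nonneg.2 (hu i.le_succ)) (hN _ (by omega)))
    (show N ≤ n - 1 by omega)
  linarith

lemma eventually_sum_mul_le_of_eventually_sum_le (hu : Antitone u)
    (hu0 : ∀ k, 0 ≤ u k) (hgu : Tendsto (fun n => ∑ k ∈ range n, g k * u k) atTop atTop)
    {r ε : ℝ} (hε : 0 < ε) (hr : ∀ᶠ n in atTop, ∑ k ∈ range n, f k ≤ r * ∑ k ∈ range n, g k) :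
    ∀ᶠ n in atTop, ∑ k ∈ range n, f k * u k ≤ (r + ε) * ∑ k ∈ range n, g k * u k := by
  obtain ⟨C, hC⟩ := exists_eventually_sum_mul_le (h := fun k => f k - r * g k) hu hu0
    (hr.mono fun n hn => by simp only [sum_sub_distrib, ← mul_sum]; linarith)
  filter_upwards [hC, hgu.eventually_ge_atTop (C / ε)] with n hCn hn
  simp only [sub_mul, sum_sub_distrib, mul_assoc, ← mul_sum] at hCn
  have := (div_le_iff₀ hε).1 hn
  linarith

lemma abs_mul_le_mul (hfg : ∀ k, |f k| ≤ g k) (hu0 : ∀ k, 0 ≤ u k) (k : ℕ) :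
    |(f * u) k| ≤ (g * u) k := by
  rw [Pi.mul_apply, Pi.mul_apply, abs_mul, abs_of_nonneg (hu0 k)]
  exact mul_le_mul_of_nonneg_right (hfg k) (hu0 k)

lemma sum_range_pos (hg : ∀ k, 0 < g k) {n : ℕ} (hn : 1 ≤ n) : 0 < ∑ k ∈ range n, g k :=
  sum_pos (fun k _ => hg k) (nonempty_range_iff.2 (by omega))

theorem limsup_sumRatio_mul_le (hfg : ∀ k, |f k| ≤ g k) (hg : ∀ k, 0 < g k)
    (hu : Antitone u) (hu0 : ∀ k, 0 ≤ u k)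
    (hgu : Tendsto (fun n => ∑ k ∈ range n, (g * u) k) atTop atTop) :
    limsup (sumRatio (f * u) (g * u)) atTop ≤ limsup (sumRatio f g) atTop := by
  refine le_of_forall_gt_imp_ge_of_dense fun r' hr' => ?_
  obtain ⟨r, hLr, hrr'⟩ := exists_between hr'
  have hlt : ∀ᶠ n in atTop, sumRatio f g n < r := eventually_lt_of_limsup_lt hLr
    (isBoundedUnder_of ⟨1, fun n => (le_abs_self _).trans (abs_sumRatio_le_one hfg n)⟩)
  have hr : ∀ᶠ n in atTop, ∑ k ∈ range n, f k ≤ r * ∑ k ∈ range n, g k := by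
    filter_upwards [hlt, eventually_ge_atTop 1] with n hn h1
    exact ((div_lt_iff₀ (sum_range_pos hg h1)).1 hn).le
  refine limsup_le_of_le (IsBoundedUnder.isCoboundedUnder_le <| isBoundedUnder_of ⟨-1, fun n =>
    neg_le_of_abs_le (abs_sumRatio_le_one (abs_mul_le_mul hfg hu0) n)⟩) ?_
  filter_upwards [eventually_sum_mul_le_of_eventually_sum_le hu hu0 hgu (sub_pos.2 hrr') hr,
    hgu.eventually_gt_atTop 0] with n hn hpos
  rw [sumRatio, div_le_iff₀ hpos]
  simpa only [Pi.mul_apply, add_sub_cancel] using hn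

theorem le_liminf_sumRatio_mul (hfg : ∀ k, |f k| ≤ g k) (hg : ∀ k, 0 < g k)
    (hu : Antitone u) (hu0 : ∀ k, 0 ≤ u k)
    (hgu : Tendsto (fun n => ∑ k ∈ range n, (g * u) k) atTop atTop) :
    liminf (sumRatio f g) atTop ≤ liminf (sumRatio (f * u) (g * u)) atTop := by
  refine le_of_forall_lt_imp_le_of_dense fun r' hr' => ?_
  obtain ⟨r, hr'r, hrL⟩ := exists_between hr'
  have hlt : ∀ᶠ n in atTop, r < sumRatio f g n := eventually_lt_of_lt_liminf hrL
    (isBoundedUnder_of ⟨-1, fun n => neg_le_of_abs_le (abs_sumRatio_le_one hfg n)⟩)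
  have hr : ∀ᶠ n in atTop, ∑ k ∈ range n, -f k ≤ -r * ∑ k ∈ range n, g k := by
    filter_upwards [hlt, eventually_ge_atTop 1] with n hn h1
    rw [sum_neg_distrib, neg_mul, neg_le_neg_iff]
    exact ((lt_div_iff₀ (sum_range_pos hg h1)).1 hn).le
  refine le_liminf_of_le (IsBoundedUnder.isCoboundedUnder_ge <| isBoundedUnder_of ⟨1, fun n =>
    (le_abs_self _).trans (abs_sumRatio_le_one (abs_mul_le_mul hfg hu0) n)⟩) ?_
  filter_upwards [eventually_sum_mul_le_of_eventually_sum_le hu hu0 hgu (sub_pos.2 hr'r) hr,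
    hgu.eventually_gt_atTop 0] with n hn hpos
  rw [sumRatio, le_div_iff₀ hpos]
  simp only [neg_mul, sum_neg_distrib, Pi.mul_apply] at hn ⊢
  linarith

end WeightedRatio

def aSummand (A : Set ℕ) (α : ℝ) (k : ℕ) : ℝ := chiFun A (k + 1) * ((k : ℝ) + 1) ^ α

lemma aSum_eq_sum_range (A : Set ℕ) (α : ℝ) (n : ℕ) :
    aSum A α n = ∑ k ∈ range n, aSummand A α k := by
  rw [aSum, ← Ico_add_one_right_eq_Icc, sum_Ico_eq_sum_range, Nat.add_sub_cancel]
  simp only [aSummand, add_comm 1, Nat.cast_add, Nat.cast_one]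

lemma aSum_div_aSum_univ (A : Set ℕ) (α : ℝ) :
    (fun n => aSum A α n / aSum Set.univ α n) = sumRatio (aSummand A α) (aSummand Set.univ α) := by
  ext n
  simp only [aSum_eq_sum_range, sumRatio]

lemma aSummand_univ_pos (α : ℝ) (k : ℕ) : 0 < aSummand Set.univ α k := by
  simp only [aSummand, chiFun, Set.indicator_univ, Pi.one_apply, one_mul]
  positivity

lemma abs_aSummand_le (A : Set ℕ) (α : ℝ) (k : ℕ) :
    |aSummand A α k| ≤ aSummand Set.univ α k := by
  have hpos : 0 < ((k : ℝ) + 1) ^ α := by positivity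
  by_cases hk : k + 1 ∈ A <;> simp [aSummand, chiFun, hk, abs_of_pos hpos, hpos.le]

lemma aSummand_mul_rpow_sub (A : Set ℕ) (α β : ℝ) :
    aSummand A β * (fun k : ℕ => ((k : ℝ) + 1) ^ (α - β)) = aSummand A α := by
  ext k
  rw [Pi.mul_apply, aSummand, aSummand, mul_assoc, ← Real.rpow_add (by positivity), add_sub_cancel]

lemma antitone_rpow_succ {γ : ℝ} (hγ : γ ≤ 0) : Antitone fun k : ℕ => ((k : ℝ) + 1) ^ γ :=
  fun _ _ hkl => Real.rpow_le_rpow_of_nonpos (by positivity) (by gcongr) hγ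

lemma tendsto_sum_aSummand_univ {α : ℝ} (hα : -1 ≤ α) :
    Tendsto (fun n => ∑ k ∈ range n, aSummand Set.univ α k) atTop atTop := by
  refine tendsto_atTop_mono (fun n => sum_le_sum fun k _ => ?_)
    Real.tendsto_sum_range_one_div_nat_succ_atTop
  have h1 : (1 : ℝ) ≤ k + 1 := by simp
  calc 1 / ((k : ℝ) + 1) = ((k : ℝ) + 1) ^ (-1 : ℝ) := by rw [Real.rpow_neg_one, one_div]
    _ ≤ ((k : ℝ) + 1) ^ α := Real.rpow_le_rpow_of_exponent_le h1 hα
    _ = aSummand Set.univ α k := by simp [aSummand, chiFun]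

theorem upperADens_mono {α β : ℝ} (hα : -1 ≤ α) (hαβ : α ≤ β) (A : Set ℕ) :
    upperADens A α ≤ upperADens A β := by
  have h := limsup_sumRatio_mul_le (abs_aSummand_le A β) (aSummand_univ_pos β)
    (antitone_rpow_succ (sub_nonpos.2 hαβ)) (fun k => by positivity)
    (by simpa only [aSummand_mul_rpow_sub] using tendsto_sum_aSummand_univ hα)
  simpa only [upperADens, aSum_div_aSum_univ, aSummand_mul_rpow_sub] using h

theorem lowerADens_anti {α β : ℝ} (hα : -1 ≤ α) (hαβ : α ≤ β) (A : Set ℕ) :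
    lowerADens A β ≤ lowerADens A α := by
  have h := le_liminf_sumRatio_mul (abs_aSummand_le A β) (aSummand_univ_pos β)
    (antitone_rpow_succ (sub_nonpos.2 hαβ)) (fun k => by positivity)
    (by simpa only [aSummand_mul_rpow_sub] using tendsto_sum_aSummand_univ hα)
  simpa only [lowerADens, aSum_div_aSum_univ, aSummand_mul_rpow_sub] using h

theorem lowerADens_le_upperADens (A : Set ℕ) (α : ℝ) : lowerADens A α ≤ upperADens A α := by
  have hbound := abs_sumRatio_le_one (abs_aSummand_le A α)
  rw [lowerADens, upperADens, aSum_div_aSum_univ]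
  exact liminf_le_limsup (isBoundedUnder_of ⟨1, fun n => (abs_le.1 (hbound n)).2⟩)
    (isBoundedUnder_of ⟨-1, fun n => (abs_le.1 (hbound n)).1⟩)

/-- Monotonicity of `α`-densities: if `-1 ≤ α ≤ β` then
`d̲_β(A) ≤ d̲_α(A) ≤ d̄_α(A) ≤ d̄_β(A)`. -/
theorem stmt2 (α β : ℝ) (h1 : -1 ≤ α) (h2 : α ≤ β) (A : Set ℕ) :
    lowerADens A β ≤ lowerADens A α ∧ lowerADens A α ≤ upperADens A α ∧
      upperADens A α ≤ upperADens A β :=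
  ⟨lowerADens_anti h1 h2 A, lowerADens_le_upperADens A α, upperADens_mono h1 h2 A⟩
end
end

section
/- If α > 0 and A ⊆ ℕ has asymptotic density (A ∈ 𝒟), then d̄_α(A) = d(A). -/
open Filter Topology

noncomputable section

open Finset Asymptotics

/-!
Abel summation writes `A_α(n) - d ℕ_α(n) = ∑_{k ≤ n} (χ_A(k) - d) k^α` as
`E(n) n^α - ∑_{k < n} E(k) ((k+1)^α - k^α)` with `E(k) = A(k) - d k = o(k)`.
The increments of `k^α` are nonnegative and `k ((k+1)^α - k^α) ≤ (k+1)^(α+1) - k^(α+1)`, so both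
terms are `o(n^(α+1))`, while comparison with `∫₀ⁿ x^α dx` gives `ℕ_α(n) ≥ n^(α+1)/(α+1)`.
Hence `A_α(n)/ℕ_α(n) → d`, so its limsup is `d`.
-/

lemma sum_Icc_mul_eq_sub_sum_range (c w : ℕ → ℝ) (n : ℕ) :
    ∑ k ∈ Icc 1 n, c k * w k =
      (∑ k ∈ Icc 1 n, c k) * w n - ∑ k ∈ range n, (∑ j ∈ Icc 1 k, c j) * (w (k + 1) - w k) := by
  induction n with
  | zero => simp
  | succ n ih =>
    rw [sum_Icc_succ_top (by omega), sum_Icc_succ_top (by omega), sum_range_succ, ih]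
    ring

lemma isLittleO_sum_Icc_mul {c w : ℕ → ℝ}
    (hc : (fun n ↦ ∑ k ∈ Icc 1 n, c k) =o[atTop] (fun n ↦ (n : ℝ)))
    (hw : Monotone w) (hw₀ : 0 ≤ w) (hw_top : Tendsto (fun n ↦ n * w n) atTop atTop) :
    (fun n ↦ ∑ k ∈ Icc 1 n, c k * w k) =o[atTop] (fun n ↦ n * w n) := by
  set g : ℕ → ℝ := fun k ↦ (k + 1 : ℕ) * w (k + 1) - k * w k
  have hΔ : ∀ k, 0 ≤ w (k + 1) - w k := fun k ↦ sub_nonneg.2 (hw k.le_succ)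
  have hg_eq : ∀ k, g k = k * (w (k + 1) - w k) + w (k + 1) := fun k ↦ by
    simp only [g]; push_cast; ring
  have hg : 0 ≤ g := fun k ↦ by
    rw [hg_eq]; exact add_nonneg (mul_nonneg k.cast_nonneg (hΔ k)) (hw₀ _)
  have hsum_g : ∀ n, ∑ k ∈ range n, g k = n * w n := fun n ↦
    (sum_range_sub (fun k : ℕ ↦ (k : ℝ) * w k) n).trans (by simp)
  have hterm : (fun k ↦ (∑ j ∈ Icc 1 k, c j) * (w (k + 1) - w k)) =o[atTop] g := by
    refine (hc.mul_isBigO (isBigO_refl (fun k ↦ w (k + 1) - w k) _)).trans_isBigO ?_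
    refine IsBigO.of_bound 1 (Eventually.of_forall fun k ↦ ?_)
    rw [Real.norm_of_nonneg (mul_nonneg k.cast_nonneg (hΔ k)), Real.norm_of_nonneg (hg k),
      one_mul, hg_eq]
    exact le_add_of_nonneg_right (hw₀ _)
  have hsum := hterm.sum_range hg (by simpa only [hsum_g] using hw_top)
  simp only [hsum_g] at hsum
  simp only [sum_Icc_mul_eq_sub_sum_range c w]
  exact (hc.mul_isBigO (isBigO_refl w _)).sub hsum

lemma rpow_add_one_div_le_sum_Icc_rpow {α : ℝ} (hα : 0 ≤ α) (n : ℕ) :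
    (n : ℝ) ^ (α + 1) / (α + 1) ≤ ∑ k ∈ Icc 1 n, (k : ℝ) ^ α := by
  have hmono : MonotoneOn (fun x : ℝ ↦ x ^ α) (Set.Icc 0 (0 + n)) :=
    fun x hx y _ hxy ↦ Real.rpow_le_rpow hx.1 hxy hα
  have hint := hmono.integral_le_sum
  rw [integral_rpow (by left; linarith), Real.zero_rpow (by linarith), sub_zero] at hint
  rw [← Ico_add_one_right_eq_Icc, sum_Ico_eq_sum_range, Nat.add_sub_cancel]
  simpa [add_comm] using hint

lemma aSum_univ (α : ℝ) (n : ℕ) : aSum Set.univ α n = ∑ k ∈ Icc 1 n, (k : ℝ) ^ α := by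
  simp [aSum, chiFun]

lemma aSum_sub_mul_aSum_univ (A : Set ℕ) (α d : ℝ) (n : ℕ) :
    aSum A α n - d * aSum Set.univ α n = ∑ k ∈ Icc 1 n, (chiFun A k - d) * (k : ℝ) ^ α := by
  rw [aSum_univ]
  simp only [aSum, mul_sum, sub_mul, sum_sub_distrib]

lemma isBigO_mul_rpow_aSum_univ {α : ℝ} (hα : 0 ≤ α) :
    (fun n : ℕ ↦ (n : ℝ) * (n : ℝ) ^ α) =O[atTop] aSum Set.univ α := by
  refine IsBigO.of_bound (α + 1) (Eventually.of_forall fun n ↦ ?_)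
  have hpow : (n : ℝ) * (n : ℝ) ^ α = (n : ℝ) ^ (α + 1) := by
    rw [Real.rpow_add_one' n.cast_nonneg (by linarith), mul_comm]
  have hle := rpow_add_one_div_le_sum_Icc_rpow hα n
  rw [div_le_iff₀ (by linarith), ← aSum_univ, ← hpow] at hle
  rw [Real.norm_of_nonneg (by positivity), Real.norm_of_nonneg (by rw [aSum_univ]; positivity)]
  linarith

lemma HasDensity.isLittleO_sum_sub {A : Set ℕ} {d : ℝ} (hd : HasDensity A d) :
    (fun n ↦ ∑ k ∈ Icc 1 n, (chiFun A k - d)) =o[atTop] (fun n ↦ (n : ℝ)) := by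
  have hsum : ∀ n, ∑ k ∈ Icc 1 n, (chiFun A k - d) = count A n - d * n := fun n ↦ by
    simp [count, sum_sub_distrib, mul_comm]
  simp only [hsum]
  refine (isLittleO_iff_tendsto fun n hn ↦ by simp_all [count]).2 ?_
  have := hd.sub_const d
  rw [sub_self] at this
  refine this.congr' ((eventually_ne_atTop 0).mono fun n hn ↦ ?_)
  field_simp

lemma aSum_univ_pos (α : ℝ) {n : ℕ} (hn : 1 ≤ n) : 0 < aSum Set.univ α n := by
  rw [aSum_univ]
  exact sum_pos (fun k hk ↦ Real.rpow_pos_of_pos (Nat.cast_pos.2 (mem_Icc.1 hk).1) α)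
    ⟨1, by simpa using hn⟩

lemma tendsto_div_of_isLittleO_sub_mul {ι : Type*} {l : Filter ι} {f g : ι → ℝ} {d : ℝ}
    (h : (fun i ↦ f i - d * g i) =o[l] g) (hg : ∀ᶠ i in l, g i ≠ 0) :
    Tendsto (fun i ↦ f i / g i) l (𝓝 d) := by
  have := h.tendsto_div_nhds_zero.add_const d
  rw [zero_add] at this
  refine this.congr' (hg.mono fun i hi ↦ ?_)
  field_simp
  ring

/-- If `α > 0` and `A` has asymptotic density `d(A)`, then `d̄_α(A) = d(A)`. -/
theorem stmt3 (α : ℝ) (hα : 0 < α) (A : Set ℕ) (d : ℝ) (hd : HasDensity A d) :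
    upperADens A α = d := by
  have hmono : Monotone fun k : ℕ ↦ (k : ℝ) ^ α :=
    fun j k hjk ↦ Real.rpow_le_rpow j.cast_nonneg (Nat.cast_le.2 hjk) hα.le
  have htop : Tendsto (fun n : ℕ ↦ (n : ℝ) * (n : ℝ) ^ α) atTop atTop :=
    tendsto_natCast_atTop_atTop.atTop_mul_atTop₀
      ((tendsto_rpow_atTop hα).comp tendsto_natCast_atTop_atTop)
  have herr : (fun n ↦ aSum A α n - d * aSum Set.univ α n) =o[atTop] aSum Set.univ α := by
    simp only [aSum_sub_mul_aSum_univ]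
    exact (isLittleO_sum_Icc_mul hd.isLittleO_sum_sub hmono (fun _ ↦ by positivity) htop)
      |>.trans_isBigO (isBigO_mul_rpow_aSum_univ hα.le)
  exact (tendsto_div_of_isLittleO_sub_mul herr
    ((eventually_ge_atTop 1).mono fun n hn ↦ (aSum_univ_pos α hn).ne')).limsup_eq
end
end
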